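/- Let 0 < q < 1. Then ∫₀^∞ A_q(u^{−1})² · w_SW(u; q) du = (q;q)_∞, where the integral is over u ∈ (0, ∞). -/

import Mathlib

/-- The finite q-Pochhammer symbol `(a;q)_n = ∏_{j=0}^{n-1} (1 - a q^j)` in `ℝ`. -/
noncomputable def qPochR (q a : ℝ) (n : ℕ) : ℝ :=
  ∏ j ∈ Finset.range n, (1 - a * q ^ j)

/-- The infinite q-Pochhammer symbol `(a;q)_∞ = ∏_{j=0}^{∞} (1 - a q^j)` in `ℝ`. -/
noncomputable def qPochInfR (q a : ℝ) : ℝ :=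
  ∏' j : ℕ, (1 - a * q ^ j)

/-- The Stieltjes–Wigert weight
`w_SW(x;q) = √(−1/(2π log q)) · exp{(1/(2 log q))(log(x/√q))²}`. -/
noncomputable def wSW (q x : ℝ) : ℝ :=
  Real.sqrt (-1 / (2 * Real.pi * Real.log q)) *
    Real.exp (1 / (2 * Real.log q) * Real.log (x / Real.sqrt q) ^ 2)

/-- The Ramanujan function restricted to real arguments:
`A_q(x) = Σ_{k=0}^∞ q^{k²} (−x)^k / (q;q)_k`. -/
noncomputable def ramanujanAqR (q x : ℝ) : ℝ :=
  ∑' k : ℕ, q ^ (k ^ 2) * (-x) ^ k / qPochR q q k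

/-!
Under `u = exp t` the Stieltjes–Wigert weight becomes the Gaussian density with mean `log q / 2`
and variance `-log q`, so its moments are values of the Gaussian moment generating function:
`∫ u⁻ᵐ w_SW(u) du = q^(-(m choose 2))`. Expanding `A_q(u⁻¹)²` as a double power series with
coefficients `c_l c_k`, `c_k = (-1)ᵏ q^(k²) / (q;q)_k`, and integrating term by term (everything
converges absolutely), the integral becomes `∑_{l,k} c_l c_k q^(-(l+k choose 2))`. For fixed `l`
the sum over `k` is `c_l q^(-(l choose 2))` times Euler's series
`E(x) = ∑ (-1)ᵏ q^(k choose 2) xᵏ / (q;q)_k` at `x = q^(1-l)`. Iterating `E(x) = (1 - x) E(q x)`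
gives `E(x) = (x;q)_n E(qⁿ x)` with `E(qⁿ x) → 1`, so `E(q^(1-l))` vanishes for `l ≥ 1` (a factor
of `(q^(1-l);q)_n` is zero) and `E(q) = (q;q)_∞`; only the row `l = 0` survives.
-/

open Real Filter Set MeasureTheory ProbabilityTheory Topology

lemma Nat.choose_two_succ (k : ℕ) : (k + 1).choose 2 = k.choose 2 + k := by
  rw [Nat.choose_succ_succ', Nat.choose_one_right, add_comm]

lemma Nat.add_choose_two (k l : ℕ) : (k + l).choose 2 = k.choose 2 + l.choose 2 + k * l := by
  have h : (((k + l).choose 2 : ℕ) : ℚ) = k.choose 2 + l.choose 2 + k * l := by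
    push_cast [Nat.cast_choose_two]
    ring
  exact_mod_cast h

section QPochhammer

variable {q a : ℝ}

lemma qPochR_succ (q a : ℝ) (n : ℕ) : qPochR q a (n + 1) = qPochR q a n * (1 - a * q ^ n) :=
  Finset.prod_range_succ _ _

lemma qPochR_inv_pow_eq_zero (hq : q ≠ 0) {m n : ℕ} (h : m < n) : qPochR q (q ^ m)⁻¹ n = 0 :=
  Finset.prod_eq_zero (Finset.mem_range.2 h) (by rw [inv_mul_cancel₀ (pow_ne_zero m hq), sub_self])

lemma one_sub_mul_pow_pos (hq0 : 0 ≤ q) (hq1 : q ≤ 1) (ha0 : 0 ≤ a) (ha1 : a < 1) (j : ℕ) :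
    0 < 1 - a * q ^ j :=
  sub_pos.2 <| (mul_le_of_le_one_right ha0 (pow_le_one₀ hq0 hq1)).trans_lt ha1

lemma qPochR_pos (hq0 : 0 ≤ q) (hq1 : q ≤ 1) (ha0 : 0 ≤ a) (ha1 : a < 1) (n : ℕ) :
    0 < qPochR q a n :=
  Finset.prod_pos fun j _ => one_sub_mul_pow_pos hq0 hq1 ha0 ha1 j

lemma qPochR_antitone (hq0 : 0 ≤ q) (hq1 : q ≤ 1) (ha0 : 0 ≤ a) (ha1 : a < 1) :
    Antitone (qPochR q a) :=
  antitone_nat_of_succ_le fun n => by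
    rw [qPochR_succ]
    exact mul_le_of_le_one_right (qPochR_pos hq0 hq1 ha0 ha1 n).le
      (sub_le_self _ (mul_nonneg ha0 (pow_nonneg hq0 n)))

lemma summable_log_one_sub_mul_pow (a : ℝ) (hq0 : 0 ≤ q) (hq1 : q < 1) :
    Summable fun j : ℕ => log (1 - a * q ^ j) := by
  simpa only [sub_eq_add_neg] using
    Real.summable_log_one_add_of_summable ((summable_geometric_of_lt_one hq0 hq1).mul_left a).neg

lemma hasProd_one_sub_mul_pow (hq0 : 0 ≤ q) (hq1 : q < 1) (ha0 : 0 ≤ a) (ha1 : a < 1) :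
    HasProd (fun j : ℕ => 1 - a * q ^ j) (qPochInfR q a) := by
  have h := Real.hasProd_of_hasSum_log (one_sub_mul_pow_pos hq0 hq1.le ha0 ha1)
    (summable_log_one_sub_mul_pow a hq0 hq1).hasSum
  rwa [qPochInfR, h.tprod_eq]

lemma qPochInfR_pos (hq0 : 0 ≤ q) (hq1 : q < 1) (ha0 : 0 ≤ a) (ha1 : a < 1) :
    0 < qPochInfR q a := by
  rw [qPochInfR, ← Real.rexp_tsum_eq_tprod (one_sub_mul_pow_pos hq0 hq1.le ha0 ha1)
    (summable_log_one_sub_mul_pow a hq0 hq1)]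
  exact exp_pos _

lemma tendsto_qPochR (hq0 : 0 ≤ q) (hq1 : q < 1) (ha0 : 0 ≤ a) (ha1 : a < 1) :
    Tendsto (qPochR q a) atTop (𝓝 (qPochInfR q a)) :=
  (hasProd_one_sub_mul_pow hq0 hq1 ha0 ha1).tendsto_prod_nat

lemma inv_qPochR_le (hq0 : 0 ≤ q) (hq1 : q < 1) (ha0 : 0 ≤ a) (ha1 : a < 1) (n : ℕ) :
    (qPochR q a n)⁻¹ ≤ (qPochInfR q a)⁻¹ :=
  inv_anti₀ (qPochInfR_pos hq0 hq1 ha0 ha1)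
    ((qPochR_antitone hq0 hq1.le ha0 ha1).le_of_tendsto (tendsto_qPochR hq0 hq1 ha0 ha1) n)

end QPochhammer

lemma summable_pow_choose_two_mul_pow {q : ℝ} (hq0 : 0 ≤ q) (hq1 : q < 1) (r : ℝ) :
    Summable fun k : ℕ => q ^ k.choose 2 * r ^ k := by
  refine summable_of_ratio_norm_eventually_le (r := 1 / 2) (by norm_num) ?_
  have h0 : Tendsto (fun k : ℕ => q ^ k * |r|) atTop (𝓝 0) := by
    simpa using (tendsto_pow_atTop_nhds_zero_of_lt_one hq0 hq1).mul_const |r|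
  filter_upwards [h0.eventually (ge_mem_nhds (by norm_num : (0 : ℝ) < 1 / 2))] with k hk
  have hstep : ‖q ^ (k + 1).choose 2 * r ^ (k + 1)‖ = q ^ k * |r| * ‖q ^ k.choose 2 * r ^ k‖ := by
    simp only [Nat.choose_two_succ, norm_mul, norm_pow, Real.norm_eq_abs, abs_of_nonneg hq0]
    ring
  rw [hstep]
  exact mul_le_mul_of_nonneg_right hk (norm_nonneg _)

lemma summable_norm_mul_pow_of_abs_le {q C : ℝ} {c : ℕ → ℝ} (hq0 : 0 ≤ q) (hq1 : q < 1)
    (hc : ∀ k, |c k| ≤ C * q ^ k.choose 2) (x : ℝ) : Summable fun k => ‖c k * x ^ k‖ := by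
  refine ((summable_pow_choose_two_mul_pow hq0 hq1 |x|).mul_left C).of_nonneg_of_le
    (fun _ => norm_nonneg _) fun k => ?_
  rw [norm_mul, norm_pow, Real.norm_eq_abs, Real.norm_eq_abs, ← mul_assoc]
  exact mul_le_mul_of_nonneg_right (hc k) (by positivity)

section EulerSeries

variable {q : ℝ}

noncomputable def eulerCoeff (q : ℝ) (k : ℕ) : ℝ := (-1) ^ k * q ^ k.choose 2 / qPochR q q k

noncomputable def eulerSeries (q x : ℝ) : ℝ := ∑' k, eulerCoeff q k * x ^ k

lemma abs_eulerCoeff_le (hq0 : 0 ≤ q) (hq1 : q < 1) (k : ℕ) :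
    |eulerCoeff q k| ≤ (qPochInfR q q)⁻¹ * q ^ k.choose 2 := by
  rw [eulerCoeff, abs_div, abs_mul, abs_pow, abs_neg, abs_one, one_pow, one_mul,
    abs_of_pos (qPochR_pos hq0 hq1.le hq0 hq1 k), abs_of_nonneg (pow_nonneg hq0 _), div_eq_inv_mul]
  exact mul_le_mul_of_nonneg_right (inv_qPochR_le hq0 hq1 hq0 hq1 k) (pow_nonneg hq0 _)

lemma summable_norm_eulerCoeff_mul_pow (hq0 : 0 ≤ q) (hq1 : q < 1) (x : ℝ) :
    Summable fun k => ‖eulerCoeff q k * x ^ k‖ :=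
  summable_norm_mul_pow_of_abs_le hq0 hq1 (abs_eulerCoeff_le hq0 hq1) x

lemma eulerCoeff_succ_mul (hq0 : 0 ≤ q) (hq1 : q < 1) (k : ℕ) :
    eulerCoeff q (k + 1) * (1 - q ^ (k + 1)) = -(q ^ k * eulerCoeff q k) := by
  have hfac : 1 - q * q ^ k ≠ 0 := (one_sub_mul_pow_pos hq0 hq1.le hq0 hq1 k).ne'
  have hP := (qPochR_pos hq0 hq1.le hq0 hq1 k).ne'
  rw [eulerCoeff, eulerCoeff, qPochR_succ, Nat.choose_two_succ, pow_succ' q k]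
  field_simp
  ring

lemma eulerSeries_eq_one_sub_mul (hq0 : 0 ≤ q) (hq1 : q < 1) (x : ℝ) :
    eulerSeries q x = (1 - x) * eulerSeries q (q * x) := by
  have hs := (summable_norm_eulerCoeff_mul_pow hq0 hq1 x).of_norm
  have hs' := (summable_norm_eulerCoeff_mul_pow hq0 hq1 (q * x)).of_norm
  have hdiff : eulerSeries q x - eulerSeries q (q * x) = -x * eulerSeries q (q * x) := by
    rw [eulerSeries, eulerSeries, ← hs.tsum_sub hs', (hs.sub hs').tsum_eq_zero_add,
      ← tsum_mul_left]
    simp only [pow_zero, sub_self, zero_add]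
    refine tsum_congr fun k => ?_
    calc eulerCoeff q (k + 1) * x ^ (k + 1) - eulerCoeff q (k + 1) * (q * x) ^ (k + 1)
        = eulerCoeff q (k + 1) * (1 - q ^ (k + 1)) * x ^ (k + 1) := by ring
      _ = -x * (eulerCoeff q k * (q * x) ^ k) := by rw [eulerCoeff_succ_mul hq0 hq1]; ring
  linear_combination hdiff

lemma eulerSeries_eq_qPochR_mul (hq0 : 0 ≤ q) (hq1 : q < 1) (x : ℝ) (n : ℕ) :
    eulerSeries q x = qPochR q x n * eulerSeries q (q ^ n * x) := by
  induction n with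
  | zero => simp [qPochR]
  | succ n ih =>
    rw [ih, eulerSeries_eq_one_sub_mul hq0 hq1 (q ^ n * x), qPochR_succ, pow_succ']
    ring_nf

lemma tendsto_eulerSeries_pow_mul (hq0 : 0 ≤ q) (hq1 : q < 1) (x : ℝ) :
    Tendsto (fun n : ℕ => eulerSeries q (q ^ n * x)) atTop (𝓝 1) := by
  have hlim (k : ℕ) : Tendsto (fun n : ℕ => eulerCoeff q k * (q ^ n * x) ^ k) atTop
      (𝓝 (eulerCoeff q k * (0 * x) ^ k)) :=
    (((tendsto_pow_atTop_nhds_zero_of_lt_one hq0 hq1).mul_const x).pow k).const_mul _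
  have hbound (n k : ℕ) : ‖eulerCoeff q k * (q ^ n * x) ^ k‖ ≤ ‖eulerCoeff q k * x ^ k‖ := by
    rw [mul_pow, ← mul_assoc, norm_mul _ (x ^ k), norm_mul, norm_mul]
    refine mul_le_mul_of_nonneg_right (mul_le_of_le_one_right (norm_nonneg _) ?_) (norm_nonneg _)
    rw [norm_pow, norm_pow, Real.norm_of_nonneg hq0, ← pow_mul]
    exact pow_le_one₀ hq0 hq1.le
  have h := tendsto_tsum_of_dominated_convergence (summable_norm_eulerCoeff_mul_pow hq0 hq1 x)
    hlim (Eventually.of_forall hbound)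
  rw [tsum_eq_single 0 fun k hk => by simp [hk]] at h
  have h0 : eulerCoeff q 0 = 1 := by simp [eulerCoeff, qPochR]
  simpa [eulerSeries, h0] using h

lemma eulerSeries_eq_of_tendsto_qPochR (hq0 : 0 ≤ q) (hq1 : q < 1) {x L : ℝ}
    (h : Tendsto (qPochR q x) atTop (𝓝 L)) : eulerSeries q x = L := by
  have hprod := h.mul (tendsto_eulerSeries_pow_mul hq0 hq1 x)
  rw [mul_one] at hprod
  exact tendsto_nhds_unique
    (tendsto_const_nhds.congr fun n => eulerSeries_eq_qPochR_mul hq0 hq1 x n) hprod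

lemma eulerSeries_self (hq0 : 0 ≤ q) (hq1 : q < 1) : eulerSeries q q = qPochInfR q q :=
  eulerSeries_eq_of_tendsto_qPochR hq0 hq1 (tendsto_qPochR hq0 hq1 hq0 hq1)

lemma eulerSeries_inv_pow (hq0 : 0 < q) (hq1 : q < 1) (m : ℕ) : eulerSeries q (q ^ m)⁻¹ = 0 :=
  eulerSeries_eq_of_tendsto_qPochR hq0.le hq1 <| tendsto_const_nhds.congr' <|
    (eventually_gt_atTop m).mono fun _ hn => (qPochR_inv_pow_eq_zero hq0.ne' hn).symm

end EulerSeries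

section StieltjesWigert

variable {q : ℝ}

lemma integral_Ioi_zero_eq_integral_exp_smul {E : Type*} [NormedAddCommGroup E] [NormedSpace ℝ E]
    (g : ℝ → E) : ∫ u in Ioi 0, g u = ∫ t, exp t • g (exp t) := by
  rw [← Real.range_exp, ← image_univ, integral_image_eq_integral_abs_deriv_smul MeasurableSet.univ
    (fun t _ => (hasDerivAt_exp t).hasDerivWithinAt) exp_injective.injOn, Measure.restrict_univ]
  simp only [abs_of_pos (exp_pos _)]

lemma wSW_exp (hq0 : 0 < q) (hq1 : q < 1) (t : ℝ) :
    wSW q (exp t) = gaussianPDFReal (log q / 2) (-log q).toNNReal t := by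
  have hL := log_neg hq0 hq1
  rw [wSW, gaussianPDFReal, Real.coe_toNNReal _ (by linarith), log_div (exp_ne_zero t)
    (sqrt_pos.2 hq0).ne', log_exp, log_sqrt hq0.le, ← sqrt_inv]
  congr 2 <;> field_simp

lemma integral_rpow_mul_wSW (hq0 : 0 < q) (hq1 : q < 1) (s : ℝ) :
    ∫ u in Ioi 0, u ^ s * wSW q u = q ^ (-(s * (s + 1) / 2)) := by
  have hL := log_neg hq0 hq1
  have hv : (-log q).toNNReal ≠ 0 := by simpa using hL
  have hmgf := congrFun (mgf_id_gaussianReal (μ := log q / 2) (v := (-log q).toNNReal)) (s + 1)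
  rw [mgf, integral_gaussianReal_eq_integral_smul hv, Real.coe_toNNReal _ (by linarith)] at hmgf
  rw [integral_Ioi_zero_eq_integral_exp_smul, rpow_def_of_pos hq0]
  convert hmgf using 1
  · refine integral_congr_ae (Eventually.of_forall fun t => ?_)
    simp only [smul_eq_mul, wSW_exp hq0 hq1, id, ← exp_mul]
    rw [← mul_assoc, ← exp_add]
    ring_nf
  · congr 1
    ring

lemma integral_inv_pow_mul_wSW (hq0 : 0 < q) (hq1 : q < 1) (m : ℕ) :
    ∫ u in Ioi 0, u⁻¹ ^ m * wSW q u = (q ^ m.choose 2)⁻¹ := by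
  have hpow : EqOn (fun u : ℝ => u ^ (-(m : ℝ)) * wSW q u) (fun u => u⁻¹ ^ m * wSW q u) (Ioi 0) :=
    fun u (hu : 0 < u) => by simp only [rpow_neg hu.le, rpow_natCast, inv_pow]
  have hexp : -(-(m : ℝ) * (-m + 1) / 2) = -(m.choose 2 : ℝ) := by
    rw [Nat.cast_choose_two]
    ring
  rw [← setIntegral_congr_fun measurableSet_Ioi hpow, integral_rpow_mul_wSW hq0 hq1, hexp,
    rpow_neg hq0.le, rpow_natCast]

lemma integrableOn_inv_pow_mul_wSW (hq0 : 0 < q) (hq1 : q < 1) (m : ℕ) :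
    IntegrableOn (fun u => u⁻¹ ^ m * wSW q u) (Ioi 0) :=
  Integrable.of_integral_ne_zero <| by rw [integral_inv_pow_mul_wSW hq0 hq1]; positivity

lemma wSW_nonneg (q x : ℝ) : 0 ≤ wSW q x := by
  unfold wSW
  positivity

end StieltjesWigert

section RamanujanSeries

variable {q : ℝ}

noncomputable def ramanujanCoeff (q : ℝ) (k : ℕ) : ℝ := (-1) ^ k * q ^ (k ^ 2) / qPochR q q k

lemma ramanujanAqR_eq_tsum (q x : ℝ) :
    ramanujanAqR q x = ∑' k, ramanujanCoeff q k * x ^ k :=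
  tsum_congr fun k => by rw [ramanujanCoeff, neg_pow]; ring

lemma ramanujanCoeff_eq_eulerCoeff_mul (q : ℝ) (k : ℕ) :
    ramanujanCoeff q k = eulerCoeff q k * q ^ (k + 1).choose 2 := by
  have hk : k ^ 2 = k.choose 2 + (k + 1).choose 2 := by
    have h : ((k ^ 2 : ℕ) : ℚ) = k.choose 2 + (k + 1).choose 2 := by
      push_cast [Nat.cast_choose_two]
      ring
    exact_mod_cast h
  rw [ramanujanCoeff, eulerCoeff, hk, pow_add]
  ring

lemma abs_ramanujanCoeff_le (hq0 : 0 ≤ q) (hq1 : q < 1) (k : ℕ) :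
    |ramanujanCoeff q k| ≤ (qPochInfR q q)⁻¹ * q ^ (k ^ 2) := by
  rw [ramanujanCoeff, abs_div, abs_mul, abs_pow, abs_neg, abs_one, one_pow, one_mul,
    abs_of_pos (qPochR_pos hq0 hq1.le hq0 hq1 k), abs_of_nonneg (pow_nonneg hq0 _), div_eq_inv_mul]
  exact mul_le_mul_of_nonneg_right (inv_qPochR_le hq0 hq1 hq0 hq1 k) (pow_nonneg hq0 _)

lemma summable_norm_ramanujanCoeff_mul_pow (hq0 : 0 ≤ q) (hq1 : q < 1) (x : ℝ) :
    Summable fun k => ‖ramanujanCoeff q k * x ^ k‖ :=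
  summable_norm_mul_pow_of_abs_le hq0 hq1 (fun k => (abs_ramanujanCoeff_le hq0 hq1 k).trans
    (mul_le_mul_of_nonneg_left (pow_le_pow_of_le_one hq0 hq1.le (Nat.choose_le_pow k 2))
      (inv_nonneg.2 (qPochInfR_pos hq0 hq1 hq0 hq1).le))) x

lemma pow_sq_mul_pow_sq_le (hq0 : 0 ≤ q) (hq1 : q ≤ 1) (k l : ℕ) :
    q ^ (k ^ 2) * q ^ (l ^ 2) ≤ √q ^ (k + l) * q ^ (k + l).choose 2 := by
  obtain ⟨r, hr0, rfl⟩ : ∃ r, 0 ≤ r ∧ q = r ^ 2 := ⟨√q, sqrt_nonneg q, (sq_sqrt hq0).symm⟩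
  have hr1 : r ≤ 1 := (pow_le_one_iff_of_nonneg hr0 two_ne_zero).1 hq1
  rw [sqrt_sq hr0, ← pow_mul, ← pow_mul, ← pow_mul, ← pow_add, ← pow_add]
  refine pow_le_pow_of_le_one hr0 hr1 ?_
  have h : (((k + l) + 2 * (k + l).choose 2 : ℕ) : ℚ) ≤ ((2 * k ^ 2 + 2 * l ^ 2 : ℕ) : ℚ) := by
    push_cast [Nat.cast_choose_two]
    nlinarith [sq_nonneg ((k : ℚ) - l)]
  exact_mod_cast h

lemma abs_ramanujanCoeff_mul_le (hq0 : 0 ≤ q) (hq1 : q < 1) (k l : ℕ) :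
    |ramanujanCoeff q k * ramanujanCoeff q l|
      ≤ (qPochInfR q q)⁻¹ ^ 2 * (√q ^ (k + l) * q ^ (k + l).choose 2) := by
  have hP := inv_nonneg.2 (qPochInfR_pos hq0 hq1 hq0 hq1).le
  rw [abs_mul]
  calc _ ≤ ((qPochInfR q q)⁻¹ * q ^ (k ^ 2)) * ((qPochInfR q q)⁻¹ * q ^ (l ^ 2)) :=
        mul_le_mul (abs_ramanujanCoeff_le hq0 hq1 k) (abs_ramanujanCoeff_le hq0 hq1 l)
          (abs_nonneg _) (by positivity)
    _ = (qPochInfR q q)⁻¹ ^ 2 * (q ^ (k ^ 2) * q ^ (l ^ 2)) := by ring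
    _ ≤ _ := mul_le_mul_of_nonneg_left (pow_sq_mul_pow_sq_le hq0 hq1.le k l) (by positivity)

noncomputable def ramanujanSqTerm (q : ℝ) (p : ℕ × ℕ) : ℝ :=
  ramanujanCoeff q p.1 * ramanujanCoeff q p.2 * (q ^ (p.1 + p.2).choose 2)⁻¹

lemma summable_abs_ramanujanSqTerm (hq0 : 0 < q) (hq1 : q < 1) :
    Summable fun p => |ramanujanSqTerm q p| := by
  have hg := summable_geometric_of_lt_one (sqrt_nonneg q)
    (by simpa using Real.sqrt_lt_sqrt hq0.le hq1)
  refine ((hg.mul_of_nonneg hg (fun _ => by positivity) (fun _ => by positivity)).mul_left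
    ((qPochInfR q q)⁻¹ ^ 2)).of_nonneg_of_le (fun _ => abs_nonneg _) fun p => ?_
  calc |ramanujanSqTerm q p|
      = |ramanujanCoeff q p.1 * ramanujanCoeff q p.2| * (q ^ (p.1 + p.2).choose 2)⁻¹ := by
        rw [ramanujanSqTerm, abs_mul, abs_inv, abs_pow, abs_of_pos hq0]
    _ ≤ (qPochInfR q q)⁻¹ ^ 2 * (√q ^ (p.1 + p.2) * q ^ (p.1 + p.2).choose 2)
        * (q ^ (p.1 + p.2).choose 2)⁻¹ :=
        mul_le_mul_of_nonneg_right (abs_ramanujanCoeff_mul_le hq0.le hq1 p.1 p.2) (by positivity)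
    _ = (qPochInfR q q)⁻¹ ^ 2 * (√q ^ p.1 * √q ^ p.2) := by
        rw [pow_add]
        field_simp

-- `l² + k² - (l+k choose 2) = (l² - (l choose 2)) + (k choose 2) + k(1 - l)`: the row `l` is
-- Euler's series at `q^(1-l)`.
lemma ramanujanSqTerm_eq (hq : q ≠ 0) (l k : ℕ) :
    ramanujanSqTerm q (l, k)
      = ramanujanCoeff q l * (q ^ l.choose 2)⁻¹ * (eulerCoeff q k * (q / q ^ l) ^ k) := by
  rw [ramanujanSqTerm, ramanujanCoeff_eq_eulerCoeff_mul q k, Nat.choose_two_succ,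
    Nat.add_choose_two, div_pow, ← pow_mul]
  field_simp
  ring

lemma tsum_ramanujanSqTerm_mk (hq : q ≠ 0) (l : ℕ) :
    ∑' k, ramanujanSqTerm q (l, k)
      = ramanujanCoeff q l * (q ^ l.choose 2)⁻¹ * eulerSeries q (q / q ^ l) := by
  simp_rw [ramanujanSqTerm_eq hq l, tsum_mul_left, eulerSeries]

lemma tsum_ramanujanSqTerm (hq0 : 0 < q) (hq1 : q < 1) :
    ∑' p, ramanujanSqTerm q p = qPochInfR q q := by
  have hs := (summable_abs_ramanujanSqTerm hq0 hq1).of_abs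
  rw [hs.tsum_prod' hs.prod_factor]
  simp_rw [tsum_ramanujanSqTerm_mk hq0.ne']
  rw [tsum_eq_single 0 fun l hl => ?_]
  · simp [ramanujanCoeff, qPochR, eulerSeries_self hq0.le hq1]
  obtain ⟨m, rfl⟩ := Nat.exists_eq_succ_of_ne_zero hl
  rw [pow_succ', div_mul_cancel_left₀ hq0.ne', eulerSeries_inv_pow hq0 hq1, mul_zero]

lemma sq_ramanujanAqR_mul_wSW (hq0 : 0 ≤ q) (hq1 : q < 1) (u : ℝ) :
    ramanujanAqR q u⁻¹ ^ 2 * wSW q u = ∑' p : ℕ × ℕ,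
      ramanujanCoeff q p.1 * ramanujanCoeff q p.2 * (u⁻¹ ^ (p.1 + p.2) * wSW q u) := by
  have hs := summable_norm_ramanujanCoeff_mul_pow hq0 hq1 u⁻¹
  rw [sq, ramanujanAqR_eq_tsum, tsum_mul_tsum_of_summable_norm hs hs, ← tsum_mul_right]
  exact tsum_congr fun p => by ring

lemma integral_sq_ramanujanAqR_mul_wSW (hq0 : 0 < q) (hq1 : q < 1) :
    ∫ u in Ioi 0, ramanujanAqR q u⁻¹ ^ 2 * wSW q u = ∑' p, ramanujanSqTerm q p := by
  have hint (p : ℕ × ℕ) : IntegrableOn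
      (fun u => ramanujanCoeff q p.1 * ramanujanCoeff q p.2 * (u⁻¹ ^ (p.1 + p.2) * wSW q u))
      (Ioi 0) :=
    (integrableOn_inv_pow_mul_wSW hq0 hq1 _).const_mul _
  have hnorm (p : ℕ × ℕ) :
      ∫ u in Ioi 0, ‖ramanujanCoeff q p.1 * ramanujanCoeff q p.2 * (u⁻¹ ^ (p.1 + p.2) * wSW q u)‖
        = |ramanujanSqTerm q p| := by
    rw [ramanujanSqTerm, abs_mul, abs_of_pos (by positivity : 0 < (q ^ (p.1 + p.2).choose 2)⁻¹),
      ← integral_inv_pow_mul_wSW hq0 hq1, ← integral_const_mul]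
    refine setIntegral_congr_fun measurableSet_Ioi fun u (hu : 0 < u) => ?_
    have hw := wSW_nonneg q u
    rw [norm_mul, Real.norm_eq_abs, Real.norm_of_nonneg (by positivity)]
  simp_rw [sq_ramanujanAqR_mul_wSW hq0.le hq1]
  rw [← integral_tsum_of_summable_integral_norm hint
    (by simpa only [hnorm] using summable_abs_ramanujanSqTerm hq0 hq1)]
  exact tsum_congr fun p => by
    rw [integral_const_mul, integral_inv_pow_mul_wSW hq0 hq1, ramanujanSqTerm]

end RamanujanSeries

/-- For `0 < q < 1`, `∫₀^∞ A_q(u⁻¹)² w_SW(u;q) du = (q;q)_∞`. -/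
theorem integral_ramanujanAq_sq_SW (q : ℝ) (hq0 : 0 < q) (hq1 : q < 1) :
    ∫ u in Set.Ioi (0 : ℝ), ramanujanAqR q u⁻¹ ^ 2 * wSW q u = qPochInfR q q := by
  rw [integral_sq_ramanujanAqR_mul_wSW hq0 hq1, tsum_ramanujanSqTerm hq0 hq1]
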